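/- Let A ∈ ℝ^{n×n} be Metzler. Then A is Hurwitz if and only if there exists a positive definite diagonal matrix D such that AᵀD + DA is negative definite. -/

import Mathlib

/-!
For a Metzler matrix `A` with no real eigenvalue in `[0, ∞)` the resolvent `(t • 1 - A)⁻¹` is
entrywise nonnegative for all `t ≥ 0`. For large `t` this holds because `t • 1 - A` is a Z-matrix
with positive row sums; it then propagates down to `t = 0` by real induction, since
`(M - δ • 1)⁻¹ = (1 - δ M⁻¹)⁻¹ M⁻¹` stays nonnegative for small `δ ≥ 0`. Hence `q = (-A)⁻¹ 𝟙` and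
`p = (-Aᵀ)⁻¹ 𝟙` are positive vectors with `A q < 0` and `Aᵀ p < 0`. With `D = diag (p / q)`, the
symmetric matrix `B = AᵀD + DA` has nonnegative off-diagonal entries and `B q = Aᵀ p + D A q < 0`,
and the weighted AM-GM bound `xᵀ B x ≤ ∑ᵢ (B q)ᵢ xᵢ² / qᵢ` makes it negative definite.

Conversely, an eigenpair `A v = μ v` gives `v* (AᵀP + PA) v = 2 Re μ · v* P v` for any real `P`,
so a Lyapunov certificate forces `Re μ < 0`.
-/

open Matrix Finset Filter Topology

namespace Matrix

variable {ι : Type*} [Fintype ι]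

section RowDominant

variable {R : Type*} [Field R] [LinearOrder R] [IsStrictOrderedRing R] {M : Matrix ι ι R}

lemma nonneg_of_mulVec_nonneg (hoff : ∀ i j, i ≠ j → M i j ≤ 0) (hrow : ∀ i, 0 < ∑ j, M i j)
    {x : ι → R} (hx : 0 ≤ M *ᵥ x) : 0 ≤ x := by
  by_contra hneg
  obtain ⟨i, hi⟩ : ∃ i, x i < 0 := by simpa [Pi.le_def] using hneg
  obtain ⟨k, -, hk⟩ := exists_min_image univ x ⟨i, mem_univ i⟩
  have hxk : x k < 0 := (hk i (mem_univ i)).trans_lt hi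
  have hle : (M *ᵥ x) k ≤ (∑ j, M k j) * x k := by
    simp only [mulVec, dotProduct, sum_mul]
    refine sum_le_sum fun j _ => ?_
    obtain rfl | hjk := eq_or_ne j k
    · simp
    · simpa [mul_comm] using mul_le_mul_of_nonpos_left (hk j (mem_univ j)) (hoff k j hjk.symm)
  exact (hle.trans_lt (mul_neg_of_pos_of_neg (hrow k) hxk)).not_ge (hx k)

lemma isUnit_of_rowSum_pos [DecidableEq ι] (hoff : ∀ i j, i ≠ j → M i j ≤ 0)
    (hrow : ∀ i, 0 < ∑ j, M i j) : IsUnit M := by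
  rw [isUnit_iff_isUnit_det, isUnit_iff_ne_zero]
  intro hdet
  obtain ⟨v, hv, hMv⟩ := exists_mulVec_eq_zero_iff.mpr hdet
  have hpos := nonneg_of_mulVec_nonneg hoff hrow (x := v) hMv.ge
  have hneg := nonneg_of_mulVec_nonneg hoff hrow (x := -v) (by rw [mulVec_neg, hMv, neg_zero])
  exact hv (le_antisymm (neg_nonneg.mp hneg) hpos)

lemma inv_nonneg_of_rowSum_pos [DecidableEq ι] (hoff : ∀ i j, i ≠ j → M i j ≤ 0)
    (hrow : ∀ i, 0 < ∑ j, M i j) (i j : ι) : 0 ≤ M⁻¹ i j := by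
  have hcol : M *ᵥ (M⁻¹ *ᵥ Pi.single j 1) = Pi.single j 1 := by
    rw [mulVec_mulVec, mul_nonsing_inv _ ((isUnit_iff_isUnit_det _).mp
      (isUnit_of_rowSum_pos hoff hrow)), one_mulVec]
  have hnonneg := nonneg_of_mulVec_nonneg hoff hrow (x := M⁻¹ *ᵥ Pi.single j 1)
    (by rw [hcol]; exact Pi.single_nonneg.2 zero_le_one)
  simpa [mulVec_single_one] using hnonneg i

lemma rowSum_pos_of_mul_eq_one [DecidableEq ι] {N : Matrix ι ι R} (hN : ∀ i j, 0 ≤ N i j)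
    (h : N * M = 1) (i : ι) : 0 < ∑ j, N i j := by
  refine (sum_nonneg fun j _ => hN i j).lt_of_ne fun hsum => ?_
  have hrow : ∀ j, N i j = 0 := fun j =>
    (sum_eq_zero_iff_of_nonneg fun j _ => hN i j).mp hsum.symm j (mem_univ j)
  simpa [mul_apply, hrow] using congrFun (congrFun h i) i

end RowDominant

lemma eventually_inv_sub_smul_one_nonneg [DecidableEq ι] {M : Matrix ι ι ℝ} (hM : IsUnit M)
    (hinv : ∀ i j, 0 ≤ M⁻¹ i j) : ∀ᶠ δ in 𝓝[≥] (0 : ℝ), ∀ i j, 0 ≤ (M - δ • 1)⁻¹ i j := by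
  have hsmall : ∀ᶠ δ in 𝓝 (0 : ℝ), ∀ i, δ * ∑ j, M⁻¹ i j < 1 := eventually_all.2 fun i =>
    (continuous_id.mul continuous_const).continuousAt.eventually_lt continuousAt_const (by simp)
  filter_upwards [self_mem_nhdsWithin, nhdsWithin_le_nhds hsmall] with δ (hδ : 0 ≤ δ) hδM
  -- `M - δ • 1 = M (1 - δ M⁻¹)`, whose second factor is a row-dominant Z-matrix.
  have hfac : M - δ • 1 = M * (1 - δ • M⁻¹) := by
    rw [mul_sub, mul_one, Matrix.mul_smul, mul_nonsing_inv _ ((isUnit_iff_isUnit_det _).mp hM)]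
  have hoff : ∀ i j, i ≠ j → (1 - δ • M⁻¹) i j ≤ 0 := fun i j hij => by
    simpa [one_apply_ne hij] using mul_nonneg hδ (hinv i j)
  have hrow : ∀ i, 0 < ∑ j, (1 - δ • M⁻¹) i j := fun i => by
    simpa [sum_sub_distrib, one_apply, ← mul_sum] using hδM i
  intro i j
  rw [hfac, mul_inv_rev, mul_apply]
  exact sum_nonneg fun k _ => mul_nonneg (inv_nonneg_of_rowSum_pos hoff hrow i k) (hinv k j)

lemma resolvent_nonneg_of_metzler [DecidableEq ι] {A : Matrix ι ι ℝ}
    (hA : ∀ i j, i ≠ j → 0 ≤ A i j) (hspec : ∀ t : ℝ, 0 ≤ t → t ∉ spectrum ℝ A)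
    {t : ℝ} (ht : 0 ≤ t) (i j : ι) : 0 ≤ (t • 1 - A)⁻¹ i j := by
  have hunit : ∀ u : ℝ, 0 ≤ u → IsUnit (u • 1 - A) := fun u hu => by
    simpa [spectrum.mem_iff, Algebra.algebraMap_eq_smul_one] using hspec u hu
  set s : Set ℝ := (fun u : ℝ => (u • 1 - A)⁻¹) ⁻¹' {N | ∀ i j, 0 ≤ N i j}
  obtain ⟨t₀, hrow, htt₀⟩ : ∃ t₀ : ℝ, (∀ i, ∑ j, A i j < t₀) ∧ t ≤ t₀ :=
    ((eventually_all.2 fun i => eventually_gt_atTop _).and (eventually_ge_atTop t)).exists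
  have ht₀ : t₀ ∈ s := inv_nonneg_of_rowSum_pos
    (fun i j hij => by simpa [one_apply_ne hij] using hA i j hij)
    (fun i => by simpa [sum_sub_distrib, one_apply] using hrow i)
  have hclosed : IsClosed (s ∩ Set.Icc 0 t₀) := by
    rw [Set.inter_comm]
    refine ContinuousOn.preimage_isClosed_of_isClosed (fun u hu => ?_) isClosed_Icc ?_
    · refine ((continuousAt_matrix_inv _ ?_).comp (by fun_prop)).continuousWithinAt
      rw [Ring.inverse_eq_inv']
      exact continuousAt_inv₀ ((isUnit_iff_isUnit_det _).mp (hunit u hu.1)).ne_zero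
    · simp only [Set.ofPred_forall]
      exact isClosed_iInter fun i => isClosed_iInter fun j =>
        isClosed_le continuous_const ((continuous_apply j).comp (continuous_apply i))
  refine hclosed.Icc_subset_of_forall_exists_lt ht₀ ?_ ⟨ht, htt₀⟩ i j
  rintro x ⟨hx, hx₀, -⟩ y (hyx : y < x)
  obtain ⟨δ, hδ, hδyx⟩ := ((eventually_inv_sub_smul_one_nonneg (hunit x hx₀.le) hx).filter_mono
    (nhdsWithin_mono _ Set.Ioi_subset_Ici_self) |>.and (Ioc_mem_nhdsGT (sub_pos.2 hyx))).exists
  refine ⟨x - δ, ?_, by linarith [hδyx.2], by linarith [hδyx.1]⟩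
  simpa only [s, Set.mem_preimage, Set.mem_ofPred_eq, sub_smul, sub_right_comm] using hδ

lemma spectrum_transpose {K : Type*} [Field K] [DecidableEq ι] (A : Matrix ι ι K) :
    spectrum K Aᵀ = spectrum K A := by
  ext t
  simp [mem_spectrum_iff_isRoot_charpoly, charpoly_transpose]

lemma map_mem_spectrum_map {K L : Type*} [Field K] [Field L] [DecidableEq ι] (f : K →+* L)
    {A : Matrix ι ι K} {t : K} (ht : t ∈ spectrum K A) : f t ∈ spectrum L (A.map f) := by
  rw [mem_spectrum_iff_isRoot_charpoly] at ht ⊢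
  rw [charpoly_map]
  exact ht.map

section Quadratic

variable {R : Type*} [Field R] [LinearOrder R] [IsStrictOrderedRing R] {B : Matrix ι ι R}
  {q : ι → R}

lemma dotProduct_mulVec_le_of_offDiag_nonneg (hB : Bᵀ = B) (hoff : ∀ i j, i ≠ j → 0 ≤ B i j)
    (hq : ∀ i, 0 < q i) (x : ι → R) :
    x ⬝ᵥ B *ᵥ x ≤ ∑ i, (B *ᵥ q) i * x i ^ 2 / q i := by
  have hsym : ∀ i j, B j i = B i j := fun i j => congrFun₂ hB i j
  set g : ι → ι → R := fun i j => B i j * (q j * x i ^ 2 / q i - x i * x j)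
  have hgap : ∑ i, (B *ᵥ q) i * x i ^ 2 / q i - x ⬝ᵥ B *ᵥ x = ∑ i, ∑ j, g i j := by
    simp only [g, mulVec, dotProduct, sum_mul, mul_sum, sum_div, ← sum_sub_distrib]
    refine sum_congr rfl fun i _ => sum_congr rfl fun j _ => ?_
    ring
  -- Symmetrising, each pair contributes `B i j q i q j (x i / q i - x j / q j) ^ 2 ≥ 0`.
  have hpair : ∀ i j, 0 ≤ g i j + g j i := fun i j => by
    have hid : g i j + g j i = B i j * q i * q j * (x i / q i - x j / q j) ^ 2 := by
      simp only [g, hsym i j]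
      field_simp [(hq i).ne', (hq j).ne']
      ring
    rw [hid]
    obtain rfl | hij := eq_or_ne i j
    · simp
    · exact mul_nonneg (mul_nonneg (mul_nonneg (hoff i j hij) (hq i).le) (hq j).le) (sq_nonneg _)
  have htwice : 2 * ∑ i, ∑ j, g i j = ∑ i, ∑ j, (g i j + g j i) := by
    rw [two_mul]
    nth_rewrite 2 [sum_comm]
    simp only [sum_add_distrib]
  have := sum_nonneg fun i (_ : i ∈ univ) => sum_nonneg fun j (_ : j ∈ univ) => hpair i j
  linarith

lemma posDef_neg_of_mulVec_neg [StarRing R] [TrivialStar R] (hB : Bᵀ = B)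
    (hoff : ∀ i j, i ≠ j → 0 ≤ B i j) (hq : ∀ i, 0 < q i) (hBq : ∀ i, (B *ᵥ q) i < 0) :
    (-B).PosDef := by
  refine .of_dotProduct_mulVec_pos ?_ fun x hx => ?_
  · rw [IsHermitian, conjTranspose_neg, conjTranspose_eq_transpose_of_trivial, hB]
  obtain ⟨i, hi⟩ := Function.ne_iff.mp hx
  have hneg : ∑ i, (B *ᵥ q) i * x i ^ 2 / q i < 0 := by
    refine sum_neg' (fun j _ => div_nonpos_of_nonpos_of_nonneg ?_ (hq j).le)
      ⟨i, mem_univ i, div_neg_of_neg_of_pos ?_ (hq i)⟩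
    · exact mul_nonpos_of_nonpos_of_nonneg (hBq j).le (sq_nonneg _)
    · exact mul_neg_of_neg_of_pos (hBq i) (sq_pos_of_ne_zero hi)
  rw [star_trivial, neg_mulVec, dotProduct_neg, neg_pos]
  exact (dotProduct_mulVec_le_of_offDiag_nonneg hB hoff hq x).trans_lt hneg

end Quadratic

lemma exists_pos_mulVec_neg_of_metzler [DecidableEq ι] {A : Matrix ι ι ℝ}
    (hA : ∀ i j, i ≠ j → 0 ≤ A i j) (hspec : ∀ t : ℝ, 0 ≤ t → t ∉ spectrum ℝ A) :
    ∃ q : ι → ℝ, (∀ i, 0 < q i) ∧ ∀ i, (A *ᵥ q) i < 0 := by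
  have hunit : IsUnit (-A).det := by
    simpa only [spectrum.mem_iff, map_zero, zero_sub, isUnit_iff_isUnit_det, not_not]
      using hspec 0 le_rfl
  have hinv : ∀ i j, 0 ≤ (-A)⁻¹ i j := by
    simpa using resolvent_nonneg_of_metzler hA hspec le_rfl
  refine ⟨(-A)⁻¹ *ᵥ fun _ => 1, fun i => ?_, fun i => ?_⟩
  · simpa [mulVec, dotProduct] using rowSum_pos_of_mul_eq_one hinv (nonsing_inv_mul _ hunit) i
  · have h := congrFun (congrArg (· *ᵥ fun _ => (1 : ℝ)) (mul_nonsing_inv _ hunit)) i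
    simp only [← mulVec_mulVec, neg_mulVec, one_mulVec, Pi.neg_apply] at h
    linarith

lemma posDef_neg_lyapunov_of_metzler [DecidableEq ι] {A : Matrix ι ι ℝ}
    (hA : ∀ i j, i ≠ j → 0 ≤ A i j) {p q : ι → ℝ} (hp : ∀ i, 0 < p i) (hq : ∀ i, 0 < q i)
    (hAp : ∀ i, (Aᵀ *ᵥ p) i < 0) (hAq : ∀ i, (A *ᵥ q) i < 0) :
    (-(Aᵀ * diagonal (p / q) + diagonal (p / q) * A)).PosDef := by
  have hd : ∀ i, 0 < (p / q) i := fun i => div_pos (hp i) (hq i)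
  refine posDef_neg_of_mulVec_neg (q := q) ?_ (fun i j hij => ?_) hq fun i => ?_
  · simp [transpose_add, transpose_mul, add_comm]
  · simpa using add_nonneg (mul_nonneg (hA j i hij.symm) (hd j).le)
      (mul_nonneg (hd i).le (hA i j hij))
  · have hDq : diagonal (p / q) *ᵥ q = p := funext fun j => by
      simp [mulVec_diagonal, div_mul_cancel₀ _ (hq j).ne']
    rw [add_mulVec, ← mulVec_mulVec, ← mulVec_mulVec, hDq, Pi.add_apply, mulVec_diagonal]
    exact add_neg_of_neg_of_nonpos (hAp i) (mul_nonpos_of_nonneg_of_nonpos (hd i).le (hAq i).le)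

section Lyapunov

open ComplexConjugate

lemma re_star_dotProduct_map_mulVec (M : Matrix ι ι ℝ) (v : ι → ℂ) :
    (star v ⬝ᵥ M.map (algebraMap ℝ ℂ) *ᵥ v).re =
      (fun i => (v i).re) ⬝ᵥ M *ᵥ (fun i => (v i).re) +
        (fun i => (v i).im) ⬝ᵥ M *ᵥ (fun i => (v i).im) := by
  simp only [dot_mulVec_eq_sum_sum, Complex.re_sum, ← sum_add_distrib]
  refine sum_congr rfl fun j _ => sum_congr rfl fun i _ => ?_
  simp

lemma PosDef.re_star_dotProduct_map_mulVec_pos {M : Matrix ι ι ℝ} (hM : M.PosDef)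
    {v : ι → ℂ} (hv : v ≠ 0) : 0 < (star v ⬝ᵥ M.map (algebraMap ℝ ℂ) *ᵥ v).re := by
  have hpos : ∀ x : ι → ℝ, x ≠ 0 → 0 < x ⬝ᵥ M *ᵥ x := fun x hx => by
    simpa using hM.dotProduct_mulVec_pos hx
  have hnonneg : ∀ x : ι → ℝ, 0 ≤ x ⬝ᵥ M *ᵥ x := fun x => by
    simpa using hM.posSemidef.dotProduct_mulVec_nonneg x
  rw [re_star_dotProduct_map_mulVec]
  by_cases hre : (fun i => (v i).re) = 0
  · have him : (fun i => (v i).im) ≠ 0 := fun him =>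
      hv (funext fun i => Complex.ext (congrFun hre i) (congrFun him i))
    exact add_pos_of_nonneg_of_pos (hnonneg _) (hpos _ him)
  · exact add_pos_of_pos_of_nonneg (hpos _ hre) (hnonneg _)

lemma star_dotProduct_lyapunov_mulVec_eigenvector (A P : Matrix ι ι ℝ) {μ : ℂ} {v : ι → ℂ}
    (hv : A.map (algebraMap ℝ ℂ) *ᵥ v = μ • v) :
    star v ⬝ᵥ (Aᵀ * P + P * A).map (algebraMap ℝ ℂ) *ᵥ v =
      (conj μ + μ) * (star v ⬝ᵥ P.map (algebraMap ℝ ℂ) *ᵥ v) := by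
  set f := algebraMap ℝ ℂ
  have hleft : star v ᵥ* Aᵀ.map f = conj μ • star v := by
    have hH : (A.map f)ᴴ = Aᵀ.map f := by
      ext i j
      simp [f]
    rw [← hH, ← star_mulVec, hv, star_smul, Complex.star_def]
  rw [Matrix.map_add _ (map_add f), Matrix.map_mul, Matrix.map_mul, add_mulVec, ← mulVec_mulVec,
    ← mulVec_mulVec, hv, dotProduct_add, dotProduct_mulVec, hleft]
  simp [mulVec_smul, add_mul]

theorem re_lt_zero_of_lyapunov [DecidableEq ι] {A P : Matrix ι ι ℝ} (hP : P.PosDef)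
    (hQ : (-(Aᵀ * P + P * A)).PosDef) {μ : ℂ} (hμ : μ ∈ spectrum ℂ (A.map (algebraMap ℝ ℂ))) :
    μ.re < 0 := by
  obtain ⟨v, hv, hv₀⟩ : ∃ v, A.map (algebraMap ℝ ℂ) *ᵥ v = μ • v ∧ v ≠ 0 := by
    rw [← spectrum_toLin', ← Module.End.hasEigenvalue_iff_mem_spectrum] at hμ
    simpa [Module.End.hasEigenvector_iff] using hμ.exists_hasEigenvector
  have hQv := hQ.re_star_dotProduct_map_mulVec_pos hv₀
  rw [Matrix.map_neg _ (map_neg _), neg_mulVec, dotProduct_neg,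
    star_dotProduct_lyapunov_mulVec_eigenvector A P hv] at hQv
  have hPv := hP.re_star_dotProduct_map_mulVec_pos hv₀
  simp only [Complex.neg_re, Complex.mul_re, Complex.add_re, Complex.add_im, Complex.conj_re,
    Complex.conj_im, neg_add_cancel, zero_mul, sub_zero] at hQv
  nlinarith

end Lyapunov

end Matrix

theorem stmt_19 (n : ℕ) (A : Matrix (Fin n) (Fin n) ℝ)
    (hMetzler : ∀ i j, i ≠ j → 0 ≤ A i j) :
    (∀ μ ∈ spectrum ℂ (A.map (algebraMap ℝ ℂ)), μ.re < 0) ↔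
    ∃ d : Fin n → ℝ, (∀ i, 0 < d i) ∧
      (-(Aᵀ * Matrix.diagonal d + Matrix.diagonal d * A)).PosDef := by
  constructor
  · intro hHurwitz
    have hspec : ∀ t : ℝ, 0 ≤ t → t ∉ spectrum ℝ A := fun t ht hmem =>
      (hHurwitz _ (map_mem_spectrum_map (algebraMap ℝ ℂ) hmem)).not_ge (by simpa using ht)
    obtain ⟨q, hq, hAq⟩ := exists_pos_mulVec_neg_of_metzler hMetzler hspec
    obtain ⟨p, hp, hAp⟩ := exists_pos_mulVec_neg_of_metzler (A := Aᵀ)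
      (fun i j hij => hMetzler j i hij.symm) (by rwa [spectrum_transpose])
    exact ⟨p / q, fun i => div_pos (hp i) (hq i),
      posDef_neg_lyapunov_of_metzler hMetzler hp hq hAp hAq⟩
  · rintro ⟨d, hd, hPD⟩ μ hμ
    exact re_lt_zero_of_lyapunov (posDef_diagonal_iff.mpr hd) hPD hμ
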